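/- In the setting of the fixed-point existence result (finite 𝒳, 𝒜; h, γ > 0; cost f with 0 ≤ f ≤ F and Lipschitz constant L_f in μ in total variation; transition probabilities p with induced kernels P^{Q,μ}(x,x') = p(x'|x, argmin_a Q(x,a), μ) satisfying the Lipschitz bound Σ_{x'} |P^{Q₁,μ₁}(x,x') − P^{Q₂,μ₂}(x,x')| ≤ L_p ‖μ₁−μ₂‖_TV + L_Q ‖Q₁−Q₂‖_∞ with 0 < L_p < 1, the bound Σ_{x'} |p(x'|x,a,μ₁) − p(x'|x,a,μ₂)| ≤ L_p ‖μ₁−μ₂‖_TV for all x,a, and the uniform Doeblin condition P^{Q,μ}(x,x') ≥ β ν(x') with β ∈ ((1+L_p)/2, 1)), set M = hF/(1 − e^{−γh}) and suppose additionally that (L_Q/(2β − 1 − L_p)) · (h L_f + e^{−γh} L_p M)/(1 − e^{−γh}) < 1. Then any two pairs (Q₁*, μ₁*) and (Q₂*, μ₂*), each consisting of a function Q_i* : 𝒳 × 𝒜 → ℝ with ‖Q_i*‖_∞ ≤ M and a probability distribution μ_i* satisfying Q_i*(x,a) = h f(x,a,μ_i*) + e^{−γh} Σ_{x'} p(x'|x,a,μ_i*)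 min_{a'} Q_i*(x',a') and μ_i* = μ_i* P^{Q_i*,μ_i*}, coincide: Q₁* = Q₂* and μ₁* = μ₂*. -/

import Mathlib

open Finset

/-- A probability distribution on a finite set. -/
def IsProb {𝒳 : Type*} [Fintype 𝒳] (μ : 𝒳 → ℝ) : Prop :=
  (∀ x, 0 ≤ μ x) ∧ ∑ x, μ x = 1

/-- Total variation norm: `‖m‖_TV = sup_{A ⊆ 𝒳} |Σ_{x∈A} m(x)|`. -/
noncomputable def tvNorm {𝒳 : Type*} [Fintype 𝒳] (m : 𝒳 → ℝ) : ℝ :=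
  ⨆ A : Finset 𝒳, |∑ x ∈ A, m x|

/-- Sup norm `‖Q‖_∞ = max_{(x,a)} |Q(x,a)|` for `Q : 𝒳 × 𝒜 → ℝ`. -/
noncomputable def supNorm {𝒳 𝒜 : Type*} [Fintype 𝒳] [Fintype 𝒜] (Q : 𝒳 → 𝒜 → ℝ) : ℝ :=
  ⨆ q : 𝒳 × 𝒜, |Q q.1 q.2|

section Helpers
variable {𝒳 𝒜 : Type*} [Fintype 𝒳] [Fintype 𝒜]

lemma tv_bdd (m : 𝒳 → ℝ) : BddAbove (Set.range fun A : Finset 𝒳 => |∑ x ∈ A, m x|) := by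
  classical
  exact Set.Finite.bddAbove (Set.finite_range _)

lemma le_tvNorm (m : 𝒳 → ℝ) (A : Finset 𝒳) : |∑ x ∈ A, m x| ≤ tvNorm m :=
  le_ciSup (tv_bdd m) A

lemma tvNorm_le (m : 𝒳 → ℝ) {c : ℝ} (hc : ∀ A : Finset 𝒳, |∑ x ∈ A, m x| ≤ c) :
    tvNorm m ≤ c := ciSup_le hc

lemma tvNorm_nonneg' (m : 𝒳 → ℝ) : 0 ≤ tvNorm m := by
  simpa using le_tvNorm m ∅

lemma le_supNorm (Q : 𝒳 → 𝒜 → ℝ) (x : 𝒳) (a : 𝒜) : |Q x a| ≤ supNorm Q :=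
  le_ciSup (α := ℝ) (f := fun q : 𝒳 × 𝒜 => |Q q.1 q.2|)
    (Set.Finite.bddAbove (Set.finite_range _)) (x, a)

lemma supNorm_le [Nonempty 𝒳] [Nonempty 𝒜] (Q : 𝒳 → 𝒜 → ℝ) {c : ℝ}
    (hc : ∀ x a, |Q x a| ≤ c) : supNorm Q ≤ c := ciSup_le fun q => hc q.1 q.2

/-- Lemma A: zero-sum vector against a `[0,c]`-valued weight. -/
lemma sum_mul_bound (m g : 𝒳 → ℝ) (hm : ∑ x, m x = 0) {c : ℝ} (hc : 0 ≤ c)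
    (hg0 : ∀ x, 0 ≤ g x) (hgc : ∀ x, g x ≤ c) :
    |∑ x, m x * g x| ≤ c * tvNorm m := by
  classical
  set Ap := Finset.univ.filter (fun x => 0 ≤ m x) with hAp
  set An := Finset.univ.filter (fun x => ¬ 0 ≤ m x) with hAn
  have hsplit : ∀ v : 𝒳 → ℝ, (∑ x ∈ Ap, v x) + (∑ x ∈ An, v x) = ∑ x, v x := by
    intro v; rw [hAp, hAn, Finset.sum_filter_add_sum_filter_not]
  have hApm : ∑ x ∈ Ap, m x ≤ tvNorm m :=
    le_trans (le_abs_self _) (le_tvNorm m Ap)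
  have hneg : ∑ x ∈ An, m x = - ∑ x ∈ Ap, m x := by
    have := hsplit m; linarith
  have hU1 : ∑ x ∈ Ap, m x * g x ≤ ∑ x ∈ Ap, c * m x :=
    Finset.sum_le_sum (fun x hx => by
      have hmx : 0 ≤ m x := (Finset.mem_filter.mp hx).2
      nlinarith [hg0 x, hgc x])
  have hU2 : ∑ x ∈ An, m x * g x ≤ 0 :=
    Finset.sum_nonpos (fun x hx => by
      have hmx : m x < 0 := lt_of_not_ge (Finset.mem_filter.mp hx).2
      nlinarith [hg0 x])
  have hL1 : (0:ℝ) ≤ ∑ x ∈ Ap, m x * g x :=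
    Finset.sum_nonneg (fun x hx => by
      have hmx : 0 ≤ m x := (Finset.mem_filter.mp hx).2
      exact mul_nonneg hmx (hg0 x))
  have hL2 : ∑ x ∈ An, c * m x ≤ ∑ x ∈ An, m x * g x :=
    Finset.sum_le_sum (fun x hx => by
      have hmx : m x < 0 := lt_of_not_ge (Finset.mem_filter.mp hx).2
      nlinarith [hgc x])
  have e1 : ∑ x ∈ Ap, c * m x = c * ∑ x ∈ Ap, m x := (Finset.mul_sum _ _ _).symm
  have e2 : ∑ x ∈ An, c * m x = c * ∑ x ∈ An, m x := (Finset.mul_sum _ _ _).symm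
  have htot := hsplit (fun x => m x * g x)
  have hmul : c * ∑ x ∈ Ap, m x ≤ c * tvNorm m := mul_le_mul_of_nonneg_left hApm hc
  rw [abs_le]
  constructor <;> [nlinarith; nlinarith]

/-- Lemma B: for a zero-sum vector, any partial sum is at most half the ℓ¹ norm. -/
lemma half_l1_bound (v : 𝒳 → ℝ) (hv : ∑ x, v x = 0) (A : Finset 𝒳) :
    |∑ x ∈ A, v x| ≤ (∑ x, |v x|) / 2 := by
  classical
  have h1 : (∑ x ∈ A, v x) + ∑ x ∈ Aᶜ, v x = 0 := by
    rw [Finset.sum_add_sum_compl]; exact hv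
  have h2 : |∑ x ∈ A, v x| ≤ ∑ x ∈ A, |v x| := Finset.abs_sum_le_sum_abs _ _
  have h3 : |∑ x ∈ Aᶜ, v x| ≤ ∑ x ∈ Aᶜ, |v x| := Finset.abs_sum_le_sum_abs _ _
  have h4 : (∑ x ∈ A, |v x|) + ∑ x ∈ Aᶜ, |v x| = ∑ x, |v x| := Finset.sum_add_sum_compl _ _
  have h5 : |∑ x ∈ Aᶜ, v x| = |∑ x ∈ A, v x| := by
    have : ∑ x ∈ Aᶜ, v x = -(∑ x ∈ A, v x) := by linarith
    rw [this, abs_neg]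
  linarith
end Helpers

/-- Uniqueness of the fixed-point pair `(Q*, μ*)` of the coupled Bellman/equilibrium
equations, under the extra smallness condition
`(L_Q/(2β−1−L_p)) · (h L_f + e^{−γh} L_p M)/(1 − e^{−γh}) < 1` with `M = hF/(1−e^{−γh})`. -/


theorem fixed_point_pair_unique {𝒳 𝒜 : Type*} [Fintype 𝒳] [Fintype 𝒜]
    [Nonempty 𝒳] [Nonempty 𝒜]
    (h γ F Lf Lp LQ β : ℝ) (hh : 0 < h) (hγ : 0 < γ)
    (hLp : 0 < Lp ∧ Lp < 1) (hLQ : 0 < LQ)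
    (hβ : (1 + Lp) / 2 < β ∧ β < 1)
    (f : 𝒳 → 𝒜 → (𝒳 → ℝ) → ℝ)
    (hfb : ∀ x a μ, 0 ≤ f x a μ ∧ f x a μ ≤ F)
    (hflip : ∀ x a μ₁ μ₂, |f x a μ₁ - f x a μ₂| ≤ Lf * tvNorm (fun y => μ₁ y - μ₂ y))
    (p : 𝒳 → 𝒳 → 𝒜 → (𝒳 → ℝ) → ℝ)
    (hp : ∀ x a μ, IsProb (fun x' => p x' x a μ))
    -- a fixed choice of minimizer `argmin_a Q(x,a)`
    (amin : (𝒳 → 𝒜 → ℝ) → 𝒳 → 𝒜)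
    (hamin : ∀ (Q : 𝒳 → 𝒜 → ℝ) (x : 𝒳) (a : 𝒜), Q x (amin Q x) ≤ Q x a)
    -- Lipschitz bound for the induced kernels `P^{Q,μ}(x,x') = p(x'|x, amin Q x, μ)`
    (hPlip : ∀ (Q₁ Q₂ : 𝒳 → 𝒜 → ℝ) μ₁ μ₂, IsProb μ₁ → IsProb μ₂ → ∀ x,
      ∑ x', |p x' x (amin Q₁ x) μ₁ - p x' x (amin Q₂ x) μ₂| ≤
        Lp * tvNorm (fun y => μ₁ y - μ₂ y) + LQ * supNorm (fun x a => Q₁ x a - Q₂ x a))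
    (hplip : ∀ x a μ₁ μ₂, IsProb μ₁ → IsProb μ₂ →
      ∑ x', |p x' x a μ₁ - p x' x a μ₂| ≤ Lp * tvNorm (fun y => μ₁ y - μ₂ y))
    -- uniform Doeblin condition for the induced kernels
    (ν : 𝒳 → ℝ) (hν : IsProb ν)
    (hDoe : ∀ (Q : 𝒳 → 𝒜 → ℝ) μ, IsProb μ → ∀ x x', β * ν x' ≤ p x' x (amin Q x) μ)
    -- the smallness condition with `M = hF/(1−e^{−γh})`
    (M : ℝ) (hM : M = h * F / (1 - Real.exp (-γ * h)))
    (hsmall : LQ / (2 * β - 1 - Lp) *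
      ((h * Lf + Real.exp (-γ * h) * Lp * M) / (1 - Real.exp (-γ * h))) < 1)
    -- two fixed-point pairs
    (Q₁ Q₂ : 𝒳 → 𝒜 → ℝ) (μ₁ μ₂ : 𝒳 → ℝ)
    (hQ₁b : supNorm Q₁ ≤ M) (hQ₂b : supNorm Q₂ ≤ M)
    (hμ₁ : IsProb μ₁) (hμ₂ : IsProb μ₂)
    (hbell₁ : ∀ x a, Q₁ x a = h * f x a μ₁ +
      Real.exp (-γ * h) * ∑ x', p x' x a μ₁ * (⨅ a', Q₁ x' a'))
    (hbell₂ : ∀ x a, Q₂ x a = h * f x a μ₂ +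
      Real.exp (-γ * h) * ∑ x', p x' x a μ₂ * (⨅ a', Q₂ x' a'))
    (hfix₁ : ∀ x', (∑ x, μ₁ x * p x' x (amin Q₁ x) μ₁) = μ₁ x')
    (hfix₂ : ∀ x', (∑ x, μ₂ x * p x' x (amin Q₂ x) μ₂) = μ₂ x') :
    Q₁ = Q₂ ∧ μ₁ = μ₂ := by
  classical
  set e := Real.exp (-γ * h) with he_def
  have he0 : 0 < e := Real.exp_pos _
  have he1 : e < 1 := by
    rw [he_def]
    apply Real.exp_lt_one_iff.mpr
    nlinarith
  set dμ := tvNorm (fun y => μ₁ y - μ₂ y) with hdμ_def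
  set dQ := supNorm (fun x a => Q₁ x a - Q₂ x a) with hdQ_def
  have hdμ0 : 0 ≤ dμ := tvNorm_nonneg' _
  have hpt : ∀ x a, |Q₁ x a - Q₂ x a| ≤ dQ := fun x a => by
    simpa using le_supNorm (fun x a => Q₁ x a - Q₂ x a) x a
  have hdQ0 : 0 ≤ dQ :=
    le_trans (abs_nonneg _) (hpt (Classical.arbitrary 𝒳) (Classical.arbitrary 𝒜))
  have hμsum0 : ∑ x, (μ₁ x - μ₂ x) = 0 := by
    rw [Finset.sum_sub_distrib, hμ₁.2, hμ₂.2]; ring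
  have hMnn : 0 ≤ M :=
    le_trans (le_trans (abs_nonneg _) (le_supNorm Q₁ (Classical.arbitrary 𝒳)
      (Classical.arbitrary 𝒜))) hQ₁b
  -- the infimum over actions is attained at `amin`
  have hinf : ∀ (Q : 𝒳 → 𝒜 → ℝ) (x : 𝒳), (⨅ a', Q x a') = Q x (amin Q x) := by
    intro Q x
    refine le_antisymm (ciInf_le (Set.Finite.bddBelow (Set.finite_range _)) _)
      (le_ciInf (hamin Q x))
  have hm₁M : ∀ x', |(⨅ a', Q₁ x' a')| ≤ M := by
    intro x'
    rw [hinf]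
    exact le_trans (le_supNorm Q₁ _ _) hQ₁b
  have hmdiff : ∀ x', |(⨅ a', Q₁ x' a') - (⨅ a', Q₂ x' a')| ≤ dQ := by
    intro x'
    rw [abs_le]
    constructor
    · have h1 : (⨅ a', Q₂ x' a') ≤ Q₂ x' (amin Q₁ x') := by
        rw [hinf]; exact hamin _ _ _
      have h2 := neg_abs_le (Q₁ x' (amin Q₁ x') - Q₂ x' (amin Q₁ x'))
      have h3 := hpt x' (amin Q₁ x')
      rw [hinf Q₁ x']
      have := abs_nonneg (Q₁ x' (amin Q₁ x') - Q₂ x' (amin Q₁ x'))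
      have h4 : -dQ ≤ Q₁ x' (amin Q₁ x') - Q₂ x' (amin Q₁ x') := by
        have := hpt x' (amin Q₁ x'); linarith [neg_abs_le (Q₁ x' (amin Q₁ x') - Q₂ x' (amin Q₁ x'))]
      linarith
    · have h1 : (⨅ a', Q₁ x' a') ≤ Q₁ x' (amin Q₂ x') := by
        rw [hinf]; exact hamin _ _ _
      have h4 : Q₁ x' (amin Q₂ x') - Q₂ x' (amin Q₂ x') ≤ dQ :=
        le_trans (le_abs_self _) (hpt x' (amin Q₂ x'))
      rw [hinf Q₂ x']
      linarith
  -- Step 1 : (1-e) dQ <= (h Lf + e Lp M) dmu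
  have step1 : (1 - e) * dQ ≤ (h * Lf + e * Lp * M) * dμ := by
    have hpt2 : ∀ x a, |Q₁ x a - Q₂ x a| ≤ h * Lf * dμ + e * (M * (Lp * dμ) + dQ) := by
      intro x a
      have key : Q₁ x a - Q₂ x a = h * (f x a μ₁ - f x a μ₂) +
          e * ((∑ x', (p x' x a μ₁ - p x' x a μ₂) * (⨅ a', Q₁ x' a')) +
            ∑ x', p x' x a μ₂ * ((⨅ a', Q₁ x' a') - (⨅ a', Q₂ x' a'))) := by
        have s1 : ∑ x', (p x' x a μ₁ - p x' x a μ₂) * (⨅ a', Q₁ x' a') =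
            (∑ x', p x' x a μ₁ * (⨅ a', Q₁ x' a')) -
              ∑ x', p x' x a μ₂ * (⨅ a', Q₁ x' a') := by
          rw [← Finset.sum_sub_distrib]
          exact Finset.sum_congr rfl fun x' _ => by ring
        have s2 : ∑ x', p x' x a μ₂ * ((⨅ a', Q₁ x' a') - (⨅ a', Q₂ x' a')) =
            (∑ x', p x' x a μ₂ * (⨅ a', Q₁ x' a')) -
              ∑ x', p x' x a μ₂ * (⨅ a', Q₂ x' a') := by
          rw [← Finset.sum_sub_distrib]
          exact Finset.sum_congr rfl fun x' _ => by ring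
        rw [hbell₁ x a, hbell₂ x a, s1, s2]
        ring
      have hS1 : |∑ x', (p x' x a μ₁ - p x' x a μ₂) * (⨅ a', Q₁ x' a')| ≤ M * (Lp * dμ) := by
        have t1 : |∑ x', (p x' x a μ₁ - p x' x a μ₂) * (⨅ a', Q₁ x' a')| ≤
            ∑ x', |p x' x a μ₁ - p x' x a μ₂| * M := by
          refine le_trans (Finset.abs_sum_le_sum_abs _ _) (Finset.sum_le_sum fun x' _ => ?_)
          rw [abs_mul]
          exact mul_le_mul_of_nonneg_left (hm₁M x') (abs_nonneg _)
        have t2 : ∑ x', |p x' x a μ₁ - p x' x a μ₂| * M =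
            (∑ x', |p x' x a μ₁ - p x' x a μ₂|) * M := (Finset.sum_mul _ _ _).symm
        have t3 := hplip x a μ₁ μ₂ hμ₁ hμ₂
        have t4 : (∑ x', |p x' x a μ₁ - p x' x a μ₂|) * M ≤ Lp * dμ * M :=
          mul_le_mul_of_nonneg_right t3 hMnn
        calc |∑ x', (p x' x a μ₁ - p x' x a μ₂) * (⨅ a', Q₁ x' a')|
            ≤ (∑ x', |p x' x a μ₁ - p x' x a μ₂|) * M := by rw [← t2]; exact t1
          _ ≤ Lp * dμ * M := t4
          _ = M * (Lp * dμ) := by ring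
      have hS2 : |∑ x', p x' x a μ₂ * ((⨅ a', Q₁ x' a') - (⨅ a', Q₂ x' a'))| ≤ dQ := by
        have t1 : |∑ x', p x' x a μ₂ * ((⨅ a', Q₁ x' a') - (⨅ a', Q₂ x' a'))| ≤
            ∑ x', p x' x a μ₂ * dQ := by
          refine le_trans (Finset.abs_sum_le_sum_abs _ _) (Finset.sum_le_sum fun x' _ => ?_)
          rw [abs_mul, abs_of_nonneg ((hp x a μ₂).1 x')]
          exact mul_le_mul_of_nonneg_left (hmdiff x') ((hp x a μ₂).1 x')
        have t2 : ∑ x', p x' x a μ₂ * dQ = dQ := by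
          rw [← Finset.sum_mul, (hp x a μ₂).2, one_mul]
        linarith
      have hf := hflip x a μ₁ μ₂
      have habs : |Q₁ x a - Q₂ x a| ≤ h * |f x a μ₁ - f x a μ₂| +
          e * (|∑ x', (p x' x a μ₁ - p x' x a μ₂) * (⨅ a', Q₁ x' a')| +
            |∑ x', p x' x a μ₂ * ((⨅ a', Q₁ x' a') - (⨅ a', Q₂ x' a'))|) := by
        rw [key]
        refine le_trans (abs_add_le _ _) ?_
        rw [abs_mul, abs_mul, abs_of_pos hh, abs_of_pos he0]
        have := mul_le_mul_of_nonneg_left (abs_add_le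
          (∑ x', (p x' x a μ₁ - p x' x a μ₂) * (⨅ a', Q₁ x' a'))
          (∑ x', p x' x a μ₂ * ((⨅ a', Q₁ x' a') - (⨅ a', Q₂ x' a')))) he0.le
        linarith
      have hf2 : h * |f x a μ₁ - f x a μ₂| ≤ h * (Lf * dμ) :=
        mul_le_mul_of_nonneg_left hf hh.le
      have hS3 : e * (|∑ x', (p x' x a μ₁ - p x' x a μ₂) * (⨅ a', Q₁ x' a')| +
            |∑ x', p x' x a μ₂ * ((⨅ a', Q₁ x' a') - (⨅ a', Q₂ x' a'))|) ≤
          e * (M * (Lp * dμ) + dQ) :=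
        mul_le_mul_of_nonneg_left (by linarith) he0.le
      calc |Q₁ x a - Q₂ x a| ≤ _ := habs
        _ ≤ h * (Lf * dμ) + e * (M * (Lp * dμ) + dQ) := by linarith
        _ = h * Lf * dμ + e * (M * (Lp * dμ) + dQ) := by ring
    have hsup : dQ ≤ h * Lf * dμ + e * (M * (Lp * dμ) + dQ) :=
      supNorm_le _ fun x a => by simpa using hpt2 x a
    nlinarith [hsup]
  -- Step 2 : (2b - 1 - Lp) dmu <= LQ dQ
  have step2 : (2 * β - 1 - Lp) * dμ ≤ LQ * dQ := by
    have hzero : ∀ x : 𝒳,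
        ∑ x', (p x' x (amin Q₁ x) μ₁ - p x' x (amin Q₂ x) μ₂) = 0 := by
      intro x
      rw [Finset.sum_sub_distrib, (hp x (amin Q₁ x) μ₁).2, (hp x (amin Q₂ x) μ₂).2]
      ring
    have key : ∀ A : Finset 𝒳, |∑ x' ∈ A, (μ₁ x' - μ₂ x')| ≤
        (1 - β) * dμ + (Lp * dμ + LQ * dQ) / 2 := by
      intro A
      have hdecomp : ∑ x' ∈ A, (μ₁ x' - μ₂ x') =
          (∑ x, (μ₁ x - μ₂ x) * (∑ x' ∈ A, p x' x (amin Q₁ x) μ₁)) +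
            ∑ x, μ₂ x * (∑ x' ∈ A, (p x' x (amin Q₁ x) μ₁ - p x' x (amin Q₂ x) μ₂)) := by
        have h1 : ∀ x' ∈ A, μ₁ x' - μ₂ x' =
            ∑ x, (μ₁ x * p x' x (amin Q₁ x) μ₁ - μ₂ x * p x' x (amin Q₂ x) μ₂) := by
          intro x' _
          rw [Finset.sum_sub_distrib, hfix₁ x', hfix₂ x']
        rw [Finset.sum_congr rfl h1, Finset.sum_comm, ← Finset.sum_add_distrib]
        refine Finset.sum_congr rfl fun x _ => ?_
        rw [Finset.mul_sum, Finset.mul_sum, ← Finset.sum_add_distrib]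
        refine Finset.sum_congr rfl fun x' _ => ?_
        ring
      have hg0 : ∀ x, 0 ≤ (∑ x' ∈ A, p x' x (amin Q₁ x) μ₁) - β * ∑ x' ∈ A, ν x' := by
        intro x
        rw [Finset.mul_sum, ← Finset.sum_sub_distrib]
        exact Finset.sum_nonneg fun x' _ => sub_nonneg.mpr (hDoe Q₁ μ₁ hμ₁ x x')
      have hg1 : ∀ x, (∑ x' ∈ A, p x' x (amin Q₁ x) μ₁) - β * ∑ x' ∈ A, ν x' ≤ 1 - β := by
        intro x
        have hsub : ∑ x' ∈ A, (p x' x (amin Q₁ x) μ₁ - β * ν x') ≤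
            ∑ x', (p x' x (amin Q₁ x) μ₁ - β * ν x') :=
          Finset.sum_le_sum_of_subset_of_nonneg (Finset.subset_univ A)
            (fun x' _ _ => sub_nonneg.mpr (hDoe Q₁ μ₁ hμ₁ x x'))
        have e1 : ∑ x', (p x' x (amin Q₁ x) μ₁ - β * ν x') = 1 - β := by
          rw [Finset.sum_sub_distrib, (hp x (amin Q₁ x) μ₁).2]
          have : ∑ x', β * ν x' = β := by rw [← Finset.mul_sum, hν.2, mul_one]
          rw [this]
        have e2 : ∑ x' ∈ A, (p x' x (amin Q₁ x) μ₁ - β * ν x') =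
            (∑ x' ∈ A, p x' x (amin Q₁ x) μ₁) - β * ∑ x' ∈ A, ν x' := by
          rw [Finset.sum_sub_distrib, Finset.mul_sum]
        linarith [hsub, e1.symm ▸ (e2 ▸ hsub)]
      have hT1 : |∑ x, (μ₁ x - μ₂ x) * (∑ x' ∈ A, p x' x (amin Q₁ x) μ₁)| ≤
          (1 - β) * dμ := by
        have hre : ∑ x, (μ₁ x - μ₂ x) * (∑ x' ∈ A, p x' x (amin Q₁ x) μ₁) =
            ∑ x, (μ₁ x - μ₂ x) *
              ((∑ x' ∈ A, p x' x (amin Q₁ x) μ₁) - β * ∑ x' ∈ A, ν x') := by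
          simp only [mul_sub]
          rw [Finset.sum_sub_distrib]
          have : ∑ x, (μ₁ x - μ₂ x) * (β * ∑ x' ∈ A, ν x') =
              (∑ x, (μ₁ x - μ₂ x)) * (β * ∑ x' ∈ A, ν x') := (Finset.sum_mul _ _ _).symm
          rw [this, hμsum0, zero_mul, sub_zero]
        rw [hre]
        have := sum_mul_bound (fun x => μ₁ x - μ₂ x)
          (fun x => (∑ x' ∈ A, p x' x (amin Q₁ x) μ₁) - β * ∑ x' ∈ A, ν x')
          hμsum0 (c := 1 - β) (by linarith [hβ.2]) hg0 hg1
        simpa using this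
      have hT2 : |∑ x, μ₂ x * (∑ x' ∈ A, (p x' x (amin Q₁ x) μ₁ - p x' x (amin Q₂ x) μ₂))| ≤
          (Lp * dμ + LQ * dQ) / 2 := by
        have hb : ∀ x : 𝒳, |∑ x' ∈ A, (p x' x (amin Q₁ x) μ₁ - p x' x (amin Q₂ x) μ₂)| ≤
            (Lp * dμ + LQ * dQ) / 2 := by
          intro x
          have h5 := half_l1_bound
            (fun x' => p x' x (amin Q₁ x) μ₁ - p x' x (amin Q₂ x) μ₂) (hzero x) A
          have h6 := hPlip Q₁ Q₂ μ₁ μ₂ hμ₁ hμ₂ x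
          linarith
        calc |∑ x, μ₂ x * (∑ x' ∈ A, (p x' x (amin Q₁ x) μ₁ - p x' x (amin Q₂ x) μ₂))|
            ≤ ∑ x, |μ₂ x * (∑ x' ∈ A, (p x' x (amin Q₁ x) μ₁ - p x' x (amin Q₂ x) μ₂))| :=
              Finset.abs_sum_le_sum_abs _ _
          _ ≤ ∑ x, μ₂ x * ((Lp * dμ + LQ * dQ) / 2) := by
              refine Finset.sum_le_sum fun x _ => ?_
              rw [abs_mul, abs_of_nonneg (hμ₂.1 x)]
              exact mul_le_mul_of_nonneg_left (hb x) (hμ₂.1 x)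
          _ = (Lp * dμ + LQ * dQ) / 2 := by rw [← Finset.sum_mul, hμ₂.2, one_mul]
      rw [hdecomp]
      exact le_trans (abs_add_le _ _) (by linarith)
    have hle : dμ ≤ (1 - β) * dμ + (Lp * dμ + LQ * dQ) / 2 :=
      tvNorm_le _ fun A => by simpa using key A
    linarith
  have hc1 : 0 < 1 - e := by linarith
  have hc2 : 0 < 2 * β - 1 - Lp := by
    have := hβ.1; linarith
  have hprod : LQ * (h * Lf + e * Lp * M) < (2 * β - 1 - Lp) * (1 - e) := by
    rw [div_mul_div_comm, div_lt_one (by positivity)] at hsmall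
    linarith
  have hdμ_eq : dμ = 0 := by
    have hle : dμ ≤ 0 := by nlinarith [mul_le_mul_of_nonneg_left step1 hLQ.le,
      mul_le_mul_of_nonneg_left step2 hc1.le]
    linarith
  have hdQ_eq : dQ = 0 := by
    have h9 := step1
    rw [hdμ_eq, mul_zero] at h9
    nlinarith [h9, hc1, hdQ0]
  constructor
  · funext x a
    have := hpt x a
    rw [hdQ_eq] at this
    have h0 := abs_nonneg (Q₁ x a - Q₂ x a)
    have : |Q₁ x a - Q₂ x a| = 0 := le_antisymm this h0
    have := abs_eq_zero.mp this
    linarith [sub_eq_zero.mp this]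
  · funext x
    have h1 := le_tvNorm (fun y => μ₁ y - μ₂ y) {x}
    rw [← hdμ_def, hdμ_eq] at h1
    simp only [Finset.sum_singleton] at h1
    have h0 := abs_nonneg (μ₁ x - μ₂ x)
    have : μ₁ x - μ₂ x = 0 := abs_eq_zero.mp (le_antisymm h1 h0)
    linarith
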